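/- Let b be an odd positive integer and let G ⊆ O(2) be the dihedral group generated by reflections across lines at angles 0 and π/b. Let r₂ be the reflection across the y-axis. Then for every α ∈ G, the composition α ∘ r₂ is not the identity, and if α ∘ r₂ has a real eigenvector of eigenvalue ±1 and is a rotation, then α ∘ r₂ is rotation by π. -/

import Mathlib

/-!
Every element of `⟨reflMat 0, reflMat (π / b)⟩` is a rotation by `2kπ/b` or a reflection
across the line at angle `kπ/b`. If `α` is a rotation, `α * r₂` is a reflection, of
determinant `-1`. If `α` is a reflection, `α * r₂` is the rotation by `2kπ/b - π`; as `b` is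
odd, `2k - b` is never a multiple of `2b`, so this angle is never a multiple of `2π`. A
rotation with a real eigenvalue `c` has `cos ψ = c` and `sin ψ = 0`, so the eigenvalue must
be `-1` and the rotation is by `π`.
-/

/-- Rotation of ℝ² by angle `φ`, as a 2×2 matrix. -/
noncomputable def rotMat (φ : ℝ) : Matrix (Fin 2) (Fin 2) ℝ :=
  !![Real.cos φ, -Real.sin φ; Real.sin φ, Real.cos φ]

/-- Linear reflection of ℝ² across the line through the origin at angle `θ`. -/
noncomputable def reflMat (θ : ℝ) : Matrix (Fin 2) (Fin 2) ℝ :=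
  !![Real.cos (2*θ), Real.sin (2*θ); Real.sin (2*θ), -Real.cos (2*θ)]

theorem rotMat_mul_rotMat (φ ψ : ℝ) : rotMat φ * rotMat ψ = rotMat (φ + ψ) := by
  simp only [rotMat, Matrix.cons_mul, Real.cos_add, Real.sin_add]
  ext i j; fin_cases i <;> fin_cases j <;> simp <;> ring

theorem rotMat_mul_reflMat (φ θ : ℝ) : rotMat φ * reflMat θ = reflMat (θ + φ / 2) := by
  have h : 2 * (θ + φ / 2) = 2 * θ + φ := by ring
  simp only [rotMat, reflMat, h, Real.cos_add, Real.sin_add]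
  ext i j; fin_cases i <;> fin_cases j <;> simp <;> ring

theorem reflMat_mul_rotMat (φ θ : ℝ) : reflMat θ * rotMat φ = reflMat (θ - φ / 2) := by
  have h : 2 * (θ - φ / 2) = 2 * θ - φ := by ring
  simp only [rotMat, reflMat, h, Real.cos_sub, Real.sin_sub]
  ext i j; fin_cases i <;> fin_cases j <;> simp <;> ring

theorem reflMat_mul_reflMat (θ θ' : ℝ) :
    reflMat θ * reflMat θ' = rotMat (2 * (θ - θ')) := by
  simp only [rotMat, reflMat, mul_sub, Real.cos_sub, Real.sin_sub]
  ext i j; fin_cases i <;> fin_cases j <;> simp <;> ring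

theorem rotMat_zero : rotMat 0 = 1 := by
  simp [rotMat, Matrix.one_fin_two]

theorem det_reflMat (θ : ℝ) : (reflMat θ).det = -1 := by
  rw [reflMat, Matrix.det_fin_two_of]
  linear_combination -Real.sin_sq_add_cos_sq (2 * θ)

theorem reflMat_mul_self (θ : ℝ) : reflMat θ * reflMat θ = 1 := by
  rw [reflMat_mul_reflMat, sub_self, mul_zero, rotMat_zero]

open Matrix in
theorem exists_int_of_mem_closure_reflMat {θ : ℝ} {g₀ g₁ : orthogonalGroup (Fin 2) ℝ}
    (hg₀ : (g₀ : Matrix (Fin 2) (Fin 2) ℝ) = reflMat 0)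
    (hg₁ : (g₁ : Matrix (Fin 2) (Fin 2) ℝ) = reflMat θ)
    {α : orthogonalGroup (Fin 2) ℝ} (hα : α ∈ Subgroup.closure {g₀, g₁}) :
    ∃ k : ℤ, (α : Matrix (Fin 2) (Fin 2) ℝ) = rotMat (2 * k * θ) ∨
      (α : Matrix (Fin 2) (Fin 2) ℝ) = reflMat (k * θ) := by
  have hgen : ∀ g ∈ ({g₀, g₁} : Set (orthogonalGroup (Fin 2) ℝ)),
      ∃ k : ℤ, (g : Matrix (Fin 2) (Fin 2) ℝ) = reflMat (k * θ) := by
    rintro g (rfl | rfl)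
    · exact ⟨0, by simp [hg₀]⟩
    · exact ⟨1, by simp [hg₁]⟩
  induction hα using Subgroup.closure_induction'' with
  | mem g hg => exact (hgen g hg).imp fun _ => Or.inr
  | inv_mem g hg =>
    obtain ⟨k, hk⟩ := hgen g hg
    have hgg : g * g = 1 := Subtype.ext (by simp [hk, reflMat_mul_self])
    exact ⟨k, Or.inr (by rw [inv_eq_of_mul_eq_one_right hgg, hk])⟩
  | one => exact ⟨0, Or.inl (by simp [rotMat_zero])⟩
  | mul x y _ _ ihx ihy =>
    obtain ⟨k, hx | hx⟩ := ihx <;> obtain ⟨l, hy | hy⟩ := ihy <;>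
      simp only [UnitaryGroup.mul_apply, hx, hy, rotMat_mul_rotMat, rotMat_mul_reflMat,
        reflMat_mul_rotMat, reflMat_mul_reflMat]
    · exact ⟨k + l, Or.inl (by push_cast; ring_nf)⟩
    · exact ⟨l + k, Or.inr (by push_cast; ring_nf)⟩
    · exact ⟨k - l, Or.inr (by push_cast; ring_nf)⟩
    · exact ⟨k - l, Or.inl (by push_cast; ring_nf)⟩

theorem det_rotMat_sub_smul_one (ψ c : ℝ) :
    (rotMat ψ - c • 1).det = (Real.cos ψ - c) ^ 2 + Real.sin ψ ^ 2 := by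
  simp [rotMat, Matrix.det_fin_two, Matrix.one_fin_two]
  ring

theorem cos_eq_and_sin_eq_zero_of_rotMat_mulVec_eq_smul {ψ c : ℝ} {v : Fin 2 → ℝ}
    (hv : v ≠ 0) (h : (rotMat ψ).mulVec v = c • v) : Real.cos ψ = c ∧ Real.sin ψ = 0 := by
  have hker : (rotMat ψ - c • 1).mulVec v = 0 := by
    rw [Matrix.sub_mulVec, h, Matrix.smul_mulVec, Matrix.one_mulVec, sub_self]
  have hdet : (rotMat ψ - c • 1).det = 0 := Matrix.exists_mulVec_eq_zero_iff.mp ⟨v, hv, hker⟩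
  rw [det_rotMat_sub_smul_one] at hdet
  constructor <;> nlinarith [sq_nonneg (Real.cos ψ - c), sq_nonneg (Real.sin ψ)]

theorem cos_two_mul_int_mul_pi_div_sub_pi_div_two_ne_one {b : ℕ} (hb : Odd b) (k : ℤ) :
    Real.cos (2 * (k * (Real.pi / b) - Real.pi / 2)) ≠ 1 := by
  rw [Ne, Real.cos_eq_one_iff]
  rintro ⟨n, hn⟩
  have hb0 : (b : ℝ) ≠ 0 := by exact_mod_cast hb.pos.ne'
  -- this also cancels the common factor `π`
  field_simp at hn
  have hint : n * 2 * (b : ℤ) = 2 * k - b := by exact_mod_cast hn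
  have heven : Even (b : ℤ) := ⟨k - n * b, by linarith⟩
  exact Int.not_even_iff_odd.mpr ((Int.odd_coe_nat b).mpr hb) heven

theorem alpha_mul_r2_ne_one_and_rotation_pi_general (b : ℕ) (hbo : Odd b)
    (g₀ g₁ r₂ : Matrix.orthogonalGroup (Fin 2) ℝ)
    (hg₀ : (g₀ : Matrix (Fin 2) (Fin 2) ℝ) = reflMat 0)
    (hg₁ : (g₁ : Matrix (Fin 2) (Fin 2) ℝ) = reflMat (Real.pi / b))
    (hr₂ : (r₂ : Matrix (Fin 2) (Fin 2) ℝ) = reflMat (Real.pi / 2)) :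
    ∀ α ∈ Subgroup.closure {g₀, g₁},
      α * r₂ ≠ 1 ∧
      (((α * r₂ : Matrix.orthogonalGroup (Fin 2) ℝ) : Matrix (Fin 2) (Fin 2) ℝ).det = 1 →
        (∃ v : Fin 2 → ℝ, v ≠ 0 ∧
          (((α * r₂ : Matrix.orthogonalGroup (Fin 2) ℝ) : Matrix (Fin 2) (Fin 2) ℝ).mulVec v = v ∨
           ((α * r₂ : Matrix.orthogonalGroup (Fin 2) ℝ) : Matrix (Fin 2) (Fin 2) ℝ).mulVec v = -v)) →
        ((α * r₂ : Matrix.orthogonalGroup (Fin 2) ℝ) : Matrix (Fin 2) (Fin 2) ℝ) = rotMat Real.pi) := by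
  intro α hα
  obtain ⟨k, hk | hk⟩ := exists_int_of_mem_closure_reflMat hg₀ hg₁ hα
  · have hdet : (↑(α * r₂) : Matrix (Fin 2) (Fin 2) ℝ).det ≠ 1 := by
      rw [Matrix.UnitaryGroup.mul_apply, hk, hr₂, rotMat_mul_reflMat, det_reflMat]
      norm_num
    exact ⟨fun h => hdet (by simp [h]), fun h => absurd h hdet⟩
  · set ψ := 2 * (k * (Real.pi / b) - Real.pi / 2)
    have hrot : (↑(α * r₂) : Matrix (Fin 2) (Fin 2) ℝ) = rotMat ψ := by
      rw [Matrix.UnitaryGroup.mul_apply, hk, hr₂, reflMat_mul_reflMat]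
    have hcos : Real.cos ψ ≠ 1 := cos_two_mul_int_mul_pi_div_sub_pi_div_two_ne_one hbo k
    refine ⟨fun h => hcos ?_, ?_⟩
    · simpa [rotMat] using congrFun (congrFun (hrot.symm.trans (congrArg Subtype.val h)) 0) 0
    rintro - ⟨v, hv, hfix | hflip⟩
    · rw [hrot] at hfix
      exact absurd (cos_eq_and_sin_eq_zero_of_rotMat_mulVec_eq_smul hv
        (hfix.trans (one_smul ℝ v).symm)).1 hcos
    · rw [hrot] at hflip
      obtain ⟨hc, hs⟩ := cos_eq_and_sin_eq_zero_of_rotMat_mulVec_eq_smul hv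
        (hflip.trans (neg_one_smul ℝ v).symm)
      rw [hrot, rotMat, rotMat, hc, hs, Real.cos_pi, Real.sin_pi]

/-- Let `G` be the dihedral group generated by the reflections across lines at angles `0`
and `π/b`, `b` odd, and `r₂` the reflection across the `y`-axis. Then for every `α ∈ G`,
`α * r₂` is not the identity; and if `α * r₂` is a rotation (determinant `1`) with a
nonzero real eigenvector of eigenvalue `±1`, then `α * r₂` is rotation by `π`. -/
theorem alpha_mul_r2_ne_one_and_rotation_pi (b : ℕ) (hb : 0 < b) (hbo : Odd b)
    (g₀ g₁ r₂ : Matrix.orthogonalGroup (Fin 2) ℝ)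
    (hg₀ : (g₀ : Matrix (Fin 2) (Fin 2) ℝ) = reflMat 0)
    (hg₁ : (g₁ : Matrix (Fin 2) (Fin 2) ℝ) = reflMat (Real.pi / b))
    (hr₂ : (r₂ : Matrix (Fin 2) (Fin 2) ℝ) = reflMat (Real.pi / 2)) :
    ∀ α ∈ Subgroup.closure {g₀, g₁},
      α * r₂ ≠ 1 ∧
      (((α * r₂ : Matrix.orthogonalGroup (Fin 2) ℝ) : Matrix (Fin 2) (Fin 2) ℝ).det = 1 →
        (∃ v : Fin 2 → ℝ, v ≠ 0 ∧
          (((α * r₂ : Matrix.orthogonalGroup (Fin 2) ℝ) : Matrix (Fin 2) (Fin 2) ℝ).mulVec v = v ∨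
           ((α * r₂ : Matrix.orthogonalGroup (Fin 2) ℝ) : Matrix (Fin 2) (Fin 2) ℝ).mulVec v = -v)) →
        ((α * r₂ : Matrix.orthogonalGroup (Fin 2) ℝ) : Matrix (Fin 2) (Fin 2) ℝ) = rotMat Real.pi) :=
  alpha_mul_r2_ne_one_and_rotation_pi_general b hbo g₀ g₁ r₂ hg₀ hg₁ hr₂
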